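/- arXiv:2410.23862 — 4 statements merged into one kernel-verified Lean document; each statement's English description precedes it below -/
import Mathlib

section
/- In the linear SEM setup, for every strictly upper triangular matrix W : Matrix (Fin d) (Fin d) ℝ (W i j = 0 unless i < j), the residual decomposition E[‖x − (Wᵀ).mulVec x‖²] = E[‖N‖²] + E[‖((W⋆ − W)ᵀ).mulVec x‖²] holds. -/
/-!
Since `x = (1 - W⋆ᵀ)⁻¹ N` and `1 - Wᵀ = (1 - W⋆ᵀ) + (W⋆ - W)ᵀ`, the residual `x - Wᵀ x` equals
`N + C N` with `C = (W⋆ - W)ᵀ (1 - W⋆ᵀ)⁻¹`. The first factor of `C` is strictly lower triangular and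
the second lower triangular, so `C` has zero diagonal. For uncorrelated coordinates
`E⟪N, C N⟫ = ∑ᵢ Cᵢᵢ E[Nᵢ²] = 0`, so the cross term in the expansion of `‖N + C N‖²` vanishes.
-/

open MeasureTheory Matrix
open scoped RealInnerProductSpace

namespace Matrix

variable {n R : Type*} [LinearOrder n]

def IsStrictUpperTriangular [Zero R] (W : Matrix n n R) : Prop :=
  ∀ i j, ¬ i < j → W i j = 0

namespace IsStrictUpperTriangular

variable {V W : Matrix n n R}

theorem sub [AddGroup R] (hV : V.IsStrictUpperTriangular) (hW : W.IsStrictUpperTriangular) :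
    (V - W).IsStrictUpperTriangular := fun i j h => by
  rw [sub_apply, hV i j h, hW i j h, sub_zero]

theorem isLowerTriangular_one_sub_transpose [Ring R] [DecidableEq n]
    (hW : W.IsStrictUpperTriangular) : (1 - Wᵀ).IsLowerTriangular := fun i j (h : i < j) => by
  rw [sub_apply, one_apply_ne h.ne, transpose_apply, hW j i (not_lt_of_gt h), sub_zero]

theorem det_one_sub_transpose [CommRing R] [Fintype n] [DecidableEq n]
    (hW : W.IsStrictUpperTriangular) : (1 - Wᵀ).det = 1 := by
  rw [det_of_isLowerTriangular _ hW.isLowerTriangular_one_sub_transpose]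
  refine Finset.prod_eq_one fun i _ => ?_
  rw [sub_apply, one_apply_eq, transpose_apply, hW i i (lt_irrefl i), sub_zero]

theorem isLowerTriangular_inv_one_sub_transpose [CommRing R] [Fintype n] [DecidableEq n]
    (hW : W.IsStrictUpperTriangular) : (1 - Wᵀ)⁻¹.IsLowerTriangular := by
  have : Invertible (1 - Wᵀ) :=
    invertibleOfIsUnitDet _ (by rw [hW.det_one_sub_transpose]; exact isUnit_one)
  exact blockTriangular_inv_of_blockTriangular hW.isLowerTriangular_one_sub_transpose

theorem transpose_mul_apply_self [Fintype n] [NonUnitalNonAssocSemiring R]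
    (hW : W.IsStrictUpperTriangular) {A : Matrix n n R} (hA : A.IsLowerTriangular) (i : n) :
    (Wᵀ * A) i i = 0 := by
  rw [mul_apply]
  refine Finset.sum_eq_zero fun j _ => ?_
  rcases lt_or_ge j i with hji | hij
  · rw [hA hji, mul_zero]
  · rw [transpose_apply, hW j i (not_lt_of_ge hij), zero_mul]

end IsStrictUpperTriangular

end Matrix

section SecondMoments

variable {Ω : Type*} [MeasurableSpace Ω] {μ : Measure Ω}

theorem MeasureTheory.MemLp.integrable_inner {E : Type*} [NormedAddCommGroup E]
    [InnerProductSpace ℝ E] {f g : Ω → E} (hf : MemLp f 2 μ) (hg : MemLp g 2 μ) :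
    Integrable (fun ω => ⟪f ω, g ω⟫) μ := by
  refine (L2.integrable_inner (hf.toLp f) (hg.toLp g)).congr ?_
  filter_upwards [hf.coeFn_toLp, hg.coeFn_toLp] with ω hfω hgω
  rw [hfω, hgω]

variable {ι : Type*} [Fintype ι] [DecidableEq ι] {N : Ω → EuclideanSpace ℝ ι}

theorem integral_inner_toEuclideanCLM (hN : ∀ i, MemLp (fun ω => N ω i) 2 μ) (C : Matrix ι ι ℝ) :
    ∫ ω, ⟪N ω, toEuclideanCLM (𝕜 := ℝ) C (N ω)⟫ ∂μ = ∑ i, ∑ j, C i j * ∫ ω, N ω i * N ω j ∂μ := by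
  have hint : ∀ i j, Integrable (fun ω => N ω i * N ω j) μ := fun i j =>
    (hN i).integrable_mul (hN j)
  have hpoint : ∀ ω, ⟪N ω, toEuclideanCLM (𝕜 := ℝ) C (N ω)⟫
      = ∑ i, ∑ j, C i j * (N ω i * N ω j) := fun ω => by
    simp only [inner_toEuclideanCLM, dotProduct, mulVec, Finset.mul_sum]
    exact Finset.sum_congr rfl fun i _ => Finset.sum_congr rfl fun j _ => by ring
  simp_rw [hpoint]
  rw [integral_finsetSum _ fun i _ =>
    integrable_finsetSum _ fun j _ => (hint i j).const_mul (C i j)]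
  refine Finset.sum_congr rfl fun i _ => ?_
  rw [integral_finsetSum _ fun j _ => (hint i j).const_mul (C i j)]
  simp_rw [integral_const_mul]

theorem integral_inner_toEuclideanCLM_eq_zero (hN : ∀ i, MemLp (fun ω => N ω i) 2 μ)
    (hNuncorr : ∀ i j, i ≠ j → ∫ ω, N ω i * N ω j ∂μ = 0) {C : Matrix ι ι ℝ}
    (hC : ∀ i, C i i = 0) : ∫ ω, ⟪N ω, toEuclideanCLM (𝕜 := ℝ) C (N ω)⟫ ∂μ = 0 := by
  rw [integral_inner_toEuclideanCLM hN]
  refine Finset.sum_eq_zero fun i _ => Finset.sum_eq_zero fun j _ => ?_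
  rcases eq_or_ne i j with rfl | hij
  · rw [hC, zero_mul]
  · rw [hNuncorr i j hij, mul_zero]

theorem integral_norm_add_toEuclideanCLM_sq (hN : ∀ i, MemLp (fun ω => N ω i) 2 μ)
    (hNuncorr : ∀ i j, i ≠ j → ∫ ω, N ω i * N ω j ∂μ = 0) {C : Matrix ι ι ℝ}
    (hC : ∀ i, C i i = 0) :
    ∫ ω, ‖N ω + toEuclideanCLM (𝕜 := ℝ) C (N ω)‖ ^ 2 ∂μ
      = ∫ ω, ‖N ω‖ ^ 2 ∂μ + ∫ ω, ‖toEuclideanCLM (𝕜 := ℝ) C (N ω)‖ ^ 2 ∂μ := by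
  have hN2 : MemLp N 2 μ := memLp_piLp_iff.mpr hN
  have hCN2 : MemLp (fun ω => toEuclideanCLM (𝕜 := ℝ) C (N ω)) 2 μ :=
    (toEuclideanCLM (𝕜 := ℝ) C).comp_memLp' hN2
  have hsq : ∀ {f : Ω → EuclideanSpace ℝ ι}, MemLp f 2 μ → Integrable (fun ω => ‖f ω‖ ^ 2) μ :=
    fun hf => (memLp_two_iff_integrable_sq_norm hf.1).mp hf
  have hcross := (hN2.integrable_inner hCN2).const_mul 2
  have hsq_add_cross :
      Integrable (fun ω => ‖N ω‖ ^ 2 + 2 * ⟪N ω, toEuclideanCLM (𝕜 := ℝ) C (N ω)⟫) μ :=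
    (hsq hN2).add hcross
  simp_rw [norm_add_sq_real]
  rw [integral_add hsq_add_cross (hsq hCN2), integral_add (hsq hN2) hcross,
    integral_const_mul, integral_inner_toEuclideanCLM_eq_zero hN hNuncorr hC, mul_zero, add_zero]

end SecondMoments

theorem sem_residual_decomposition_general {d : ℕ} {Ω : Type*} [MeasurableSpace Ω]
    (P : Measure Ω)
    (N : Ω → EuclideanSpace ℝ (Fin d))
    (hN2 : ∀ i, MemLp (fun ω => N ω i) 2 P)
    (hNuncorr : ∀ i j, i ≠ j → ∫ ω, N ω i * N ω j ∂P = 0)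
    (Wstar : Matrix (Fin d) (Fin d) ℝ)
    (hWstar : ∀ i j : Fin d, ¬ i < j → Wstar i j = 0)
    (x : Ω → EuclideanSpace ℝ (Fin d))
    (hx : ∀ ω, x ω = (WithLp.equiv 2 (Fin d → ℝ)).symm
      ((1 - Wstar.transpose)⁻¹.mulVec (WithLp.equiv 2 (Fin d → ℝ) (N ω))))
    (W : Matrix (Fin d) (Fin d) ℝ)
    (hW : ∀ i j : Fin d, ¬ i < j → W i j = 0) :
    ∫ ω, ‖x ω - (WithLp.equiv 2 (Fin d → ℝ)).symm
        (W.transpose.mulVec (WithLp.equiv 2 (Fin d → ℝ) (x ω)))‖ ^ 2 ∂P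
      = (∫ ω, ‖N ω‖ ^ 2 ∂P)
        + ∫ ω, ‖(WithLp.equiv 2 (Fin d → ℝ)).symm
            ((Wstar - W).transpose.mulVec (WithLp.equiv 2 (Fin d → ℝ) (x ω)))‖ ^ 2 ∂P := by
  replace hWstar : Wstar.IsStrictUpperTriangular := hWstar
  replace hW : W.IsStrictUpperTriangular := hW
  set T := toEuclideanCLM (n := Fin d) (𝕜 := ℝ)
  change ∀ ω, x ω = T (1 - Wstarᵀ)⁻¹ (N ω) at hx
  change ∫ ω, ‖x ω - T Wᵀ (x ω)‖ ^ 2 ∂P = _ + ∫ ω, ‖T (Wstar - W)ᵀ (x ω)‖ ^ 2 ∂P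
  set C := (Wstar - W)ᵀ * (1 - Wstarᵀ)⁻¹
  have hC : ∀ i, C i i = 0 :=
    (hWstar.sub hW).transpose_mul_apply_self hWstar.isLowerTriangular_inv_one_sub_transpose
  have hinv : (1 - Wstarᵀ) * (1 - Wstarᵀ)⁻¹ = 1 :=
    mul_nonsing_inv _ (by rw [hWstar.det_one_sub_transpose]; exact isUnit_one)
  have hfactor : (1 - Wᵀ) * (1 - Wstarᵀ)⁻¹ = 1 + C := by
    rw [show 1 - Wᵀ = (1 - Wstarᵀ) + (Wstar - W)ᵀ by rw [transpose_sub]; abel, add_mul, hinv]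
  have hresidual : ∀ ω, x ω - T Wᵀ (x ω) = N ω + T C (N ω) := fun ω => by
    have := congrArg (fun A => T A (N ω)) hfactor
    simpa [map_mul, map_sub, map_add, hx ω] using this
  have hmisfit : ∀ ω, T (Wstar - W)ᵀ (x ω) = T C (N ω) := fun ω => by
    simp [C, map_mul, hx ω]
  simp_rw [hresidual, hmisfit]
  exact integral_norm_add_toEuclideanCLM_sq hN2 hNuncorr hC

/-- Residual decomposition in the linear SEM model: for any matrix `W` that is strictly
upper triangular (in the true topological ordering),
`E[‖x − Wᵀ x‖²] = E[‖N‖²] + E[‖(W⋆ − W)ᵀ x‖²]`. -/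
theorem sem_residual_decomposition {d : ℕ} {Ω : Type*} [MeasurableSpace Ω]
    (P : Measure Ω) [IsProbabilityMeasure P]
    (N : Ω → EuclideanSpace ℝ (Fin d))
    (hN2 : ∀ i, MemLp (fun ω => N ω i) 2 P)
    (hNmean : ∀ i, ∫ ω, N ω i ∂P = 0)
    (hNuncorr : ∀ i j, i ≠ j → ∫ ω, N ω i * N ω j ∂P = 0)
    (Wstar : Matrix (Fin d) (Fin d) ℝ)
    (hWstar : ∀ i j : Fin d, ¬ i < j → Wstar i j = 0)
    (x : Ω → EuclideanSpace ℝ (Fin d))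
    (hx : ∀ ω, x ω = (WithLp.equiv 2 (Fin d → ℝ)).symm
      ((1 - Wstar.transpose)⁻¹.mulVec (WithLp.equiv 2 (Fin d → ℝ) (N ω))))
    (W : Matrix (Fin d) (Fin d) ℝ)
    (hW : ∀ i j : Fin d, ¬ i < j → W i j = 0) :
    ∫ ω, ‖x ω - (WithLp.equiv 2 (Fin d → ℝ)).symm
        (W.transpose.mulVec (WithLp.equiv 2 (Fin d → ℝ) (x ω)))‖ ^ 2 ∂P
      = (∫ ω, ‖N ω‖ ^ 2 ∂P)
        + ∫ ω, ‖(WithLp.equiv 2 (Fin d → ℝ)).symm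
            ((Wstar - W).transpose.mulVec (WithLp.equiv 2 (Fin d → ℝ) (x ω)))‖ ^ 2 ∂P :=
  sem_residual_decomposition_general P N hN2 hNuncorr Wstar hWstar x hx W hW
end

section
/- In the linear SEM setup, for every strictly upper triangular matrix W : Matrix (Fin d) (Fin d) ℝ (W i j = 0 unless i < j), F(W⋆) ≤ F(W); i.e. the true matrix W⋆ minimizes the population least-squares loss over all matrices that are strictly upper triangular in the true topological ordering. -/
/-!
With `A = 1 - W⋆ᵀ`, the residual `x - Wᵀ x` equals `(1 - Wᵀ) A⁻¹ N`. Because the noise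
coordinates are uncorrelated, the loss of `W` is `∑ₖ ∑ᵢ ((1 - Wᵀ) A⁻¹)ₖᵢ² E[Nᵢ²]`. For `W = W⋆`
this matrix is the identity, so the loss is `∑ᵢ E[Nᵢ²]`. For any strictly upper triangular `W`
it is a product of two lower unitriangular matrices, hence has unit diagonal, and its diagonal
terms alone already contribute `∑ᵢ E[Nᵢ²]`.
-/

open MeasureTheory Matrix

namespace Matrix

variable {n R : Type*} [LinearOrder n]

lemma IsLowerTriangular.mul_apply_self [Fintype n] [NonUnitalNonAssocSemiring R]
    {A B : Matrix n n R} (hA : A.IsLowerTriangular) (hB : B.IsLowerTriangular) (i : n) :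
    (A * B) i i = A i i * B i i := by
  rw [mul_apply, Finset.sum_eq_single i]
  · intro k _ hki
    rcases lt_or_gt_of_ne hki with hlt | hgt
    · rw [hB (show OrderDual.toDual i < OrderDual.toDual k from hlt), mul_zero]
    · rw [hA (show OrderDual.toDual k < OrderDual.toDual i from hgt), zero_mul]
  · simp

variable [DecidableEq n] [CommRing R] {W : Matrix n n R}

lemma isLowerTriangular_one_sub_transpose (hW : ∀ i j, ¬ i < j → W i j = 0) :
    (1 - Wᵀ).IsLowerTriangular := fun i j hij => by
  have hij : i < j := hij
  simp [one_apply_ne hij.ne, hW j i hij.not_gt]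

lemma one_sub_transpose_apply_self (hW : ∀ i j, ¬ i < j → W i j = 0) (i : n) :
    (1 - Wᵀ) i i = 1 := by
  simp [hW i i (lt_irrefl i)]

variable [Fintype n]

lemma isUnit_det_one_sub_transpose (hW : ∀ i j, ¬ i < j → W i j = 0) :
    IsUnit (1 - Wᵀ).det := by
  rw [det_of_isLowerTriangular _ (isLowerTriangular_one_sub_transpose hW),
    Finset.prod_eq_one fun i _ => one_sub_transpose_apply_self hW i]
  exact isUnit_one

lemma isLowerTriangular_inv_one_sub_transpose (hW : ∀ i j, ¬ i < j → W i j = 0) :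
    (1 - Wᵀ)⁻¹.IsLowerTriangular :=
  have := (1 - Wᵀ).invertibleOfIsUnitDet (isUnit_det_one_sub_transpose hW)
  blockTriangular_inv_of_blockTriangular (isLowerTriangular_one_sub_transpose hW)

lemma inv_one_sub_transpose_apply_self (hW : ∀ i j, ¬ i < j → W i j = 0) (i : n) :
    (1 - Wᵀ)⁻¹ i i = 1 := by
  have hdiag := (isLowerTriangular_one_sub_transpose hW).mul_apply_self
    (isLowerTriangular_inv_one_sub_transpose hW) i
  rwa [mul_nonsing_inv _ (isUnit_det_one_sub_transpose hW), one_apply_eq,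
    one_sub_transpose_apply_self hW, one_mul, eq_comm] at hdiag

lemma one_sub_transpose_mul_inv_apply_self {V : Matrix n n R}
    (hW : ∀ i j, ¬ i < j → W i j = 0) (hV : ∀ i j, ¬ i < j → V i j = 0) (i : n) :
    ((1 - Wᵀ) * (1 - Vᵀ)⁻¹) i i = 1 := by
  rw [(isLowerTriangular_one_sub_transpose hW).mul_apply_self
    (isLowerTriangular_inv_one_sub_transpose hV), one_sub_transpose_apply_self hW,
    inv_one_sub_transpose_apply_self hV, one_mul]

end Matrix

section Uncorrelated

variable {Ω ι : Type*} [MeasurableSpace Ω] {P : Measure Ω} [Fintype ι]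

lemma integral_norm_sq_mulVec_of_uncorrelated {κ : Type*} [Fintype κ] {N : Ω → ι → ℝ}
    (hN2 : ∀ i, MemLp (fun ω => N ω i) 2 P)
    (hNuncorr : ∀ i j, i ≠ j → ∫ ω, N ω i * N ω j ∂P = 0) (M : Matrix κ ι ℝ) :
    ∫ ω, ‖WithLp.toLp 2 (M *ᵥ N ω)‖ ^ 2 ∂P = ∑ k, ∑ i, M k i ^ 2 * ∫ ω, N ω i ^ 2 ∂P := by
  classical
  have hcov (i j : ι) : ∫ ω, N ω i * N ω j ∂P = if i = j then ∫ ω, N ω i ^ 2 ∂P else 0 := by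
    split_ifs with h
    · simp [h, sq]
    · exact hNuncorr i j h
  have hexpand (ω : Ω) : ‖WithLp.toLp 2 (M *ᵥ N ω)‖ ^ 2
      = ∑ k, ∑ i, ∑ j, M k i * M k j * (N ω i * N ω j) := by
    rw [EuclideanSpace.real_norm_sq_eq]
    refine Finset.sum_congr rfl fun k _ => ?_
    rw [PiLp.toLp_apply, mulVec, dotProduct, sq, Finset.sum_mul_sum]
    exact Finset.sum_congr rfl fun i _ => Finset.sum_congr rfl fun j _ => by ring
  have hint (k : κ) (i j : ι) : Integrable (fun ω => M k i * M k j * (N ω i * N ω j)) P :=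
    ((hN2 i).integrable_mul (hN2 j)).const_mul _
  simp_rw [hexpand]
  rw [integral_finsetSum _ fun k _ => integrable_finsetSum _ fun i _ =>
    integrable_finsetSum _ fun j _ => hint k i j]
  refine Finset.sum_congr rfl fun k _ => ?_
  rw [integral_finsetSum _ fun i _ => integrable_finsetSum _ fun j _ => hint k i j]
  refine Finset.sum_congr rfl fun i _ => ?_
  simp_rw [integral_finsetSum _ fun j _ => hint k i j, integral_const_mul, hcov,
    mul_ite, mul_zero, Finset.sum_ite_eq, Finset.mem_univ, if_true, sq]

variable [DecidableEq ι]

lemma integral_norm_sq_sub_mulVec_of_eq_mulVec {N x : Ω → EuclideanSpace ℝ ι}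
    (hN2 : ∀ i, MemLp (fun ω => N ω i) 2 P)
    (hNuncorr : ∀ i j, i ≠ j → ∫ ω, N ω i * N ω j ∂P = 0) {B : Matrix ι ι ℝ}
    (hx : ∀ ω, x ω = WithLp.toLp 2 (B *ᵥ N ω)) (A : Matrix ι ι ℝ) :
    ∫ ω, ‖x ω - WithLp.toLp 2 (A *ᵥ x ω)‖ ^ 2 ∂P
      = ∑ k, ∑ i, ((1 - A) * B) k i ^ 2 * ∫ ω, N ω i ^ 2 ∂P := by
  have hres (ω : Ω) : x ω - WithLp.toLp 2 (A *ᵥ x ω) = WithLp.toLp 2 (((1 - A) * B) *ᵥ N ω) := by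
    rw [hx ω, ← mulVec_mulVec, sub_mulVec, one_mulVec, WithLp.toLp_sub]
  simp_rw [hres]
  exact integral_norm_sq_mulVec_of_uncorrelated hN2 hNuncorr _

end Uncorrelated

lemma sum_le_sum_sum_sq_mul_of_diag_eq_one {ι : Type*} [Fintype ι] {σ : ι → ℝ}
    (hσ : ∀ i, 0 ≤ σ i) {M : Matrix ι ι ℝ} (hM : ∀ i, M i i = 1) :
    ∑ i, σ i ≤ ∑ k, ∑ i, M k i ^ 2 * σ i :=
  Finset.sum_le_sum fun k _ => by
    simpa [hM k] using Finset.single_le_sum (f := fun i => M k i ^ 2 * σ i)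
      (fun i _ => mul_nonneg (sq_nonneg _) (hσ i)) (Finset.mem_univ k)

theorem sem_true_matrix_minimizes_general {d : ℕ} {Ω : Type*} [MeasurableSpace Ω]
    (P : Measure Ω)
    (N : Ω → EuclideanSpace ℝ (Fin d))
    (hN2 : ∀ i, MemLp (fun ω => N ω i) 2 P)
    (hNuncorr : ∀ i j, i ≠ j → ∫ ω, N ω i * N ω j ∂P = 0)
    (Wstar : Matrix (Fin d) (Fin d) ℝ)
    (hWstar : ∀ i j : Fin d, ¬ i < j → Wstar i j = 0)
    (x : Ω → EuclideanSpace ℝ (Fin d))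
    (hx : ∀ ω, x ω = (WithLp.equiv 2 (Fin d → ℝ)).symm
      ((1 - Wstar.transpose)⁻¹.mulVec (WithLp.equiv 2 (Fin d → ℝ) (N ω))))
    (W : Matrix (Fin d) (Fin d) ℝ)
    (hW : ∀ i j : Fin d, ¬ i < j → W i j = 0) :
    (1 / 2) * ∫ ω, ‖x ω - (WithLp.equiv 2 (Fin d → ℝ)).symm
        (Wstar.transpose.mulVec (WithLp.equiv 2 (Fin d → ℝ) (x ω)))‖ ^ 2 ∂P
      ≤ (1 / 2) * ∫ ω, ‖x ω - (WithLp.equiv 2 (Fin d → ℝ)).symm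
        (W.transpose.mulVec (WithLp.equiv 2 (Fin d → ℝ) (x ω)))‖ ^ 2 ∂P := by
  have hloss := integral_norm_sq_sub_mulVec_of_eq_mulVec hN2 hNuncorr hx
  simp only [WithLp.equiv_symm_apply, WithLp.equiv_apply, hloss,
    mul_nonsing_inv _ (isUnit_det_one_sub_transpose hWstar)]
  refine mul_le_mul_of_nonneg_left ?_ (by norm_num)
  simpa [one_apply] using sum_le_sum_sum_sq_mul_of_diag_eq_one
    (fun i => integral_nonneg fun ω => sq_nonneg (N ω i))
    (one_sub_transpose_mul_inv_apply_self hW hWstar)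

/-- In the linear SEM model, the true matrix `W⋆` minimizes the population least-squares
loss `F(W) = (1/2) E[‖x − Wᵀ x‖²]` over all matrices strictly upper triangular in the true
topological ordering. -/
theorem sem_true_matrix_minimizes {d : ℕ} {Ω : Type*} [MeasurableSpace Ω]
    (P : Measure Ω) [IsProbabilityMeasure P]
    (N : Ω → EuclideanSpace ℝ (Fin d))
    (hN2 : ∀ i, MemLp (fun ω => N ω i) 2 P)
    (hNmean : ∀ i, ∫ ω, N ω i ∂P = 0)
    (hNuncorr : ∀ i j, i ≠ j → ∫ ω, N ω i * N ω j ∂P = 0)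
    (Wstar : Matrix (Fin d) (Fin d) ℝ)
    (hWstar : ∀ i j : Fin d, ¬ i < j → Wstar i j = 0)
    (x : Ω → EuclideanSpace ℝ (Fin d))
    (hx : ∀ ω, x ω = (WithLp.equiv 2 (Fin d → ℝ)).symm
      ((1 - Wstar.transpose)⁻¹.mulVec (WithLp.equiv 2 (Fin d → ℝ) (N ω))))
    (W : Matrix (Fin d) (Fin d) ℝ)
    (hW : ∀ i j : Fin d, ¬ i < j → W i j = 0) :
    (1 / 2) * ∫ ω, ‖x ω - (WithLp.equiv 2 (Fin d → ℝ)).symm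
        (Wstar.transpose.mulVec (WithLp.equiv 2 (Fin d → ℝ) (x ω)))‖ ^ 2 ∂P
      ≤ (1 / 2) * ∫ ω, ‖x ω - (WithLp.equiv 2 (Fin d → ℝ)).symm
        (W.transpose.mulVec (WithLp.equiv 2 (Fin d → ℝ) (x ω)))‖ ^ 2 ∂P :=
  sem_true_matrix_minimizes_general P N hN2 hNuncorr Wstar hWstar x hx W hW
end

section
/- Let E be a real inner product space, f : E → ℝ convex and L-smooth (L > 0), and x⋆ a minimizer of f. Starting from any x₀ ∈ E, define the gradient descent iterates x_{t+1} := x_t − (1/L) • ∇f x_t. Then for every T ≥ 1, f(x_T) − f(x⋆) ≤ L * ‖x₀ − x⋆‖² / (2 * T). -/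
/-!
Combining the first-order convexity inequality at `x` with the descent lemma
`f y ≤ f x + ⟪∇f x, y - x⟫ + L/2 ‖y - x‖²` for the gradient step `y = x - L⁻¹ ∇f x` gives, for every
`z`, `f y - f z ≤ L/2 (‖x - z‖² - ‖y - z‖²)`. Taking `z = x` shows that `f (x_t)` decreases, and
taking `z = x⋆` makes the gaps `f (x_{t+1}) - f x⋆` telescope: their sum over `t < T` is at most
`L/2 ‖x₀ - x⋆‖²`, and each of them is at least the last one.
-/

open RealInnerProductSpace

section Smooth

variable {E : Type*} [NormedAddCommGroup E] [InnerProductSpace ℝ E] {f : E → ℝ} {f' : E → E}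

lemma hasDerivAt_comp_add_smul (hf : ∀ x, HasFDerivAt f (innerSL ℝ (f' x)) x) (u d : E) (s : ℝ) :
    HasDerivAt (fun s : ℝ => f (u + s • d)) ⟪f' (u + s • d), d⟫ s := by
  have hline : HasDerivAt (fun s : ℝ => u + s • d) d s := by
    simpa using ((hasDerivAt_id s).smul_const d).const_add u
  simpa [Function.comp_def] using (hf (u + s • d)).comp_hasDerivAt s hline

lemma ConvexOn.add_inner_sub_le (hconv : ConvexOn ℝ Set.univ f)
    (hf : ∀ x, HasFDerivAt f (innerSL ℝ (f' x)) x) (u v : E) :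
    f u + ⟪f' u, v - u⟫ ≤ f v := by
  have hline : ConvexOn ℝ Set.univ fun s : ℝ => f (u + s • (v - u)) := by
    simpa [Function.comp_def, AffineMap.lineMap_apply, add_comm]
      using hconv.comp_affineMap (AffineMap.lineMap u v : ℝ →ᵃ[ℝ] E)
  have hslope := hline.le_slope_of_hasDerivAt (Set.mem_univ 0) (Set.mem_univ 1) one_pos
    (hasDerivAt_comp_add_smul hf u (v - u) 0)
  simp only [slope_def_field, zero_smul, add_zero, one_smul, add_sub_cancel, sub_zero,
    div_one] at hslope
  linarith

lemma le_add_inner_sub_add_sq_of_lipschitz {L : ℝ} (hf : ∀ x, HasFDerivAt f (innerSL ℝ (f' x)) x)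
    (hlip : ∀ x y, ‖f' x - f' y‖ ≤ L * ‖x - y‖) (u v : E) :
    f v ≤ f u + ⟪f' u, v - u⟫ + L / 2 * ‖v - u‖ ^ 2 := by
  set d := v - u
  -- On `s ≥ 0`, the gradient bound makes `f` along the segment minus its quadratic model antitone.
  set g : ℝ → ℝ := fun s => f (u + s • d) - s * ⟪f' u, d⟫ - L / 2 * s ^ 2 * ‖d‖ ^ 2
  have hg : ∀ s, HasDerivAt g (⟪f' (u + s • d), d⟫ - ⟪f' u, d⟫ - L * s * ‖d‖ ^ 2) s := fun s => by
    refine (((hasDerivAt_comp_add_smul hf u d s).sub ((hasDerivAt_id s).mul_const ⟪f' u, d⟫)).sub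
      (((hasDerivAt_pow 2 s).const_mul (L / 2)).mul_const (‖d‖ ^ 2))).congr_deriv ?_
    simp only [one_mul, Nat.cast_ofNat]
    ring
  have hg'_nonpos : ∀ s ∈ interior (Set.Ici (0 : ℝ)),
      ⟪f' (u + s • d), d⟫ - ⟪f' u, d⟫ - L * s * ‖d‖ ^ 2 ≤ 0 := by
    intro s hs
    rw [interior_Ici, Set.mem_Ioi] at hs
    have hcs : ⟪f' (u + s • d) - f' u, d⟫ ≤ L * s * ‖d‖ ^ 2 :=
      calc ⟪f' (u + s • d) - f' u, d⟫ ≤ ‖f' (u + s • d) - f' u‖ * ‖d‖ := real_inner_le_norm _ _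
        _ ≤ L * ‖u + s • d - u‖ * ‖d‖ := by gcongr; exact hlip _ _
        _ = L * s * ‖d‖ ^ 2 := by
          rw [add_sub_cancel_left, norm_smul, Real.norm_of_nonneg hs.le]; ring
    rw [inner_sub_left] at hcs
    linarith
  have hanti : AntitoneOn g (Set.Ici 0) :=
    antitoneOn_of_hasDerivWithinAt_nonpos (convex_Ici 0)
      (fun s _ => (hg s).continuousAt.continuousWithinAt)
      (fun s _ => (hg s).hasDerivWithinAt) hg'_nonpos
  have h01 := hanti (Set.mem_Ici.2 le_rfl) (Set.mem_Ici.2 zero_le_one) zero_le_one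
  simp only [g, zero_smul, add_zero, zero_mul, sub_zero, one_smul, one_mul, one_pow, ne_eq,
    OfNat.ofNat_ne_zero, not_false_eq_true, zero_pow, mul_zero, d, add_sub_cancel] at h01
  linarith

lemma gradient_step_sub_le {L : ℝ} (hL : 0 < L) (hconv : ConvexOn ℝ Set.univ f)
    (hf : ∀ x, HasFDerivAt f (innerSL ℝ (f' x)) x)
    (hlip : ∀ x y, ‖f' x - f' y‖ ≤ L * ‖x - y‖) (x z : E) :
    f (x - (1 / L) • f' x) - f z ≤ L / 2 * (‖x - z‖ ^ 2 - ‖x - (1 / L) • f' x - z‖ ^ 2) := by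
  set g := f' x
  have hdesc := le_add_inner_sub_add_sq_of_lipschitz hf hlip x (x - (1 / L) • g)
  have hsupp := hconv.add_inner_sub_le hf x z
  have hstep : x - (1 / L) • g - x = -((1 / L) • g) := by abel
  have hxz : x - (1 / L) • g - z = (x - z) - (1 / L) • g := by abel
  have hzx : ⟪g, z - x⟫ = -⟪g, x - z⟫ := by rw [← inner_neg_right, neg_sub]
  rw [hstep, inner_neg_right, norm_neg, real_inner_smul_right, norm_smul,
    real_inner_self_eq_norm_sq, Real.norm_of_nonneg (by positivity)] at hdesc
  rw [hxz, norm_sub_sq_real (x - z), real_inner_smul_right, norm_smul,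
    Real.norm_of_nonneg (by positivity : (0 : ℝ) ≤ 1 / L), real_inner_comm]
  have hid : L / 2 * (‖x - z‖ ^ 2 - (‖x - z‖ ^ 2 - 2 * (1 / L * ⟪g, x - z⟫) + (1 / L * ‖g‖) ^ 2))
      = ⟪g, x - z⟫ - 1 / L * ‖g‖ ^ 2 + L / 2 * (1 / L * ‖g‖) ^ 2 := by
    field_simp; ring
  rw [hid]
  linarith

end Smooth

lemma Antitone.natCast_mul_add_le_of_le_sub_succ {a d : ℕ → ℝ} (ha : Antitone a)
    (hd : ∀ t, a (t + 1) ≤ d t - d (t + 1)) (T : ℕ) : T * a T + d T ≤ d 0 := by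
  induction T with
  | zero => simp
  | succ T ih =>
    have hmul : (T : ℝ) * a (T + 1) ≤ T * a T := by gcongr; exact ha T.le_succ
    push_cast
    linarith [hd T]

theorem gradient_descent_convergence_general
    {E : Type*} [NormedAddCommGroup E] [InnerProductSpace ℝ E]
    (f : E → ℝ) (f' : E → E) (L : ℝ) (hL : 0 < L)
    (hconv : ConvexOn ℝ (Set.univ : Set E) f)
    (hderiv : ∀ x : E, HasFDerivAt f (innerSL ℝ (f' x)) x)
    (hlip : ∀ x y : E, ‖f' x - f' y‖ ≤ L * ‖x - y‖)
    (xstar : E)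
    (x : ℕ → E)
    (hsucc : ∀ t : ℕ, x (t + 1) = x t - (1 / L) • f' (x t)) :
    ∀ T : ℕ, 1 ≤ T → f (x T) - f xstar ≤ L * ‖x 0 - xstar‖ ^ 2 / (2 * T) := by
  intro T hT
  have hstep : ∀ t z, f (x (t + 1)) - f z ≤ L / 2 * (‖x t - z‖ ^ 2 - ‖x (t + 1) - z‖ ^ 2) :=
    fun t z => by rw [hsucc]; exact gradient_step_sub_le hL hconv hderiv hlip (x t) z
  have hanti : Antitone fun t => f (x t) - f xstar := by
    refine antitone_nat_of_succ_le fun t => ?_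
    have hdecr := hstep t (x t)
    rw [sub_self, norm_zero] at hdecr
    nlinarith [sq_nonneg ‖x (t + 1) - x t‖]
  have htele := hanti.natCast_mul_add_le_of_le_sub_succ
    (d := fun t => L / 2 * ‖x t - xstar‖ ^ 2) (fun t => by linarith [hstep t xstar]) T
  have hdist : 0 ≤ L / 2 * ‖x T - xstar‖ ^ 2 := by positivity
  have hTpos : (0 : ℝ) < T := by exact_mod_cast hT
  rw [le_div_iff₀ (by positivity)]
  linarith

/-- Gradient descent with step size `1/L` on a convex `L`-smooth function: after `T ≥ 1`
steps, `f(x_T) − f(x⋆) ≤ L ‖x₀ − x⋆‖² / (2T)`. -/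
theorem gradient_descent_convergence
    {E : Type*} [NormedAddCommGroup E] [InnerProductSpace ℝ E]
    (f : E → ℝ) (f' : E → E) (L : ℝ) (hL : 0 < L)
    (hconv : ConvexOn ℝ (Set.univ : Set E) f)
    (hderiv : ∀ x : E, HasFDerivAt f (innerSL ℝ (f' x)) x)
    (hlip : ∀ x y : E, ‖f' x - f' y‖ ≤ L * ‖x - y‖)
    (xstar : E) (hmin : ∀ y : E, f xstar ≤ f y)
    (x : ℕ → E)
    (hsucc : ∀ t : ℕ, x (t + 1) = x t - (1 / L) • f' (x t)) :
    ∀ T : ℕ, 1 ≤ T → f (x T) - f xstar ≤ L * ‖x 0 - xstar‖ ^ 2 / (2 * T) :=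
  gradient_descent_convergence_general f f' L hL hconv hderiv hlip xstar x hsucc
end

section
/- Let d : ℕ and let A : Matrix (Fin d) (Fin d) ℝ have nonnegative entries (A i j ≥ 0 for all i j). Then trace (exp A) ≥ d, where exp denotes the matrix exponential, and trace (exp A) = d if and only if A is a DAG matrix, i.e. the digraph of A has no directed cycles. -/
/-!
Expanding the exponential, `trace (exp A) = ∑ₖ trace (A ^ k) / k!`. For a nonnegative matrix every
term is nonnegative and the term `k = 0` is `d`, so `trace (exp A) ≥ d` with equality iff
`trace (A ^ (k + 1)) = 0` for all `k`. Since `(A ^ (k + 1)) i i` is a sum of nonnegative weights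
of closed walks of length `k + 1` at `i`, this happens iff the digraph of `A` has no cycle.
-/

open Matrix

theorem HasSum.eq_apply_zero_iff_of_nonneg {α : Type*} [AddCommGroup α] [PartialOrder α]
    [IsOrderedAddMonoid α] [TopologicalSpace α] [IsTopologicalAddGroup α] [OrderClosedTopology α]
    {f : ℕ → α} {s : α} (hf : HasSum f s) (h : ∀ k, 0 ≤ f k) :
    s = f 0 ↔ ∀ k, f (k + 1) = 0 := by
  have htail : HasSum (fun k => f (k + 1)) (s - f 0) := by
    simpa using (hasSum_nat_add_iff' 1).mpr hf
  constructor
  · rintro rfl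
    rw [sub_self] at htail
    exact congrFun ((hasSum_zero_iff_of_nonneg fun k => h (k + 1)).mp htail)
  · intro htail_zero
    rw [← sub_eq_zero]
    exact htail.unique (by simp [htail_zero])

namespace Matrix

variable {n R : Type*} [Fintype n] [DecidableEq n]

section Nonneg

variable [Semiring R] [PartialOrder R] [IsOrderedRing R] {A : Matrix n n R}

theorem trace_pow_nonneg (hA : ∀ i j, 0 ≤ A i j) (k : ℕ) : 0 ≤ trace (A ^ k) :=
  Finset.sum_nonneg fun i _ => pow_apply_nonneg hA k i i

theorem pow_succ_apply_ne_zero_iff [NoZeroDivisors R] (hA : ∀ i j, 0 ≤ A i j) (k : ℕ) (i j : n) :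
    (A ^ (k + 1)) i j ≠ 0 ↔ ∃ l, (A ^ k) i l ≠ 0 ∧ A l j ≠ 0 := by
  rw [pow_succ, mul_apply, Ne, Finset.sum_eq_zero_iff_of_nonneg
    fun l _ => mul_nonneg (pow_apply_nonneg hA k i l) (hA l j)]
  simp

theorem transGen_iff_exists_pow_succ_apply_ne_zero [NoZeroDivisors R] (hA : ∀ i j, 0 ≤ A i j)
    {i j : n} : Relation.TransGen (fun a b => A a b ≠ 0) i j ↔ ∃ k, (A ^ (k + 1)) i j ≠ 0 := by
  constructor
  · intro h
    induction h with
    | single hij => exact ⟨0, by rwa [zero_add, pow_one]⟩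
    | tail _ hlj ih =>
      obtain ⟨k, hk⟩ := ih
      exact ⟨k + 1, (pow_succ_apply_ne_zero_iff hA _ _ _).mpr ⟨_, hk, hlj⟩⟩
  · rintro ⟨k, hk⟩
    induction k generalizing j with
    | zero => exact .single (by rwa [zero_add, pow_one] at hk)
    | succ k ih =>
      obtain ⟨l, hil, hlj⟩ := (pow_succ_apply_ne_zero_iff hA _ _ _).mp hk
      exact (ih hil).tail hlj

theorem forall_not_transGen_iff_trace_pow_succ_eq_zero [NoZeroDivisors R]
    (hA : ∀ i j, 0 ≤ A i j) :
    (∀ i, ¬ Relation.TransGen (fun a b => A a b ≠ 0) i i) ↔ ∀ k, trace (A ^ (k + 1)) = 0 := by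
  simp_rw [trace, diag, Finset.sum_eq_zero_iff_of_nonneg fun i _ => pow_apply_nonneg hA _ i i,
    transGen_iff_exists_pow_succ_apply_ne_zero hA]
  simp only [Finset.mem_univ, forall_const, not_exists, not_not]
  exact forall_comm

end Nonneg

theorem hasSum_trace_exp {𝕂 : Type*} [RCLike 𝕂] (A : Matrix n n 𝕂) :
    HasSum (fun k => (k.factorial : 𝕂)⁻¹ * trace (A ^ k)) (trace (NormedSpace.exp A)) := by
  -- `exp` only depends on the topology, which the `L∞` operator norm induces.
  let : NormedRing (Matrix n n 𝕂) := Matrix.linftyOpNormedRing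
  let : NormedAlgebra 𝕂 (Matrix n n 𝕂) := Matrix.linftyOpNormedAlgebra
  have hexp := @NormedSpace.exp_series_hasSum_exp' 𝕂 _ _ _ _ _ _
    (FiniteDimensional.complete 𝕂 (Matrix n n 𝕂)) A
  have htrace := hexp.map (traceLinearMap n 𝕂 𝕂) (LinearMap.continuous_of_finiteDimensional _)
  simp only [Function.comp_def, traceLinearMap_apply, trace_smul, smul_eq_mul] at htrace
  exact htrace

end Matrix

/-- For a matrix `A` with nonnegative entries, `trace (exp A) ≥ d`, with equality if and
only if `A` is a DAG matrix (its digraph has no directed cycles). -/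
theorem trace_exp_ge_card_iff_dag {d : ℕ} (A : Matrix (Fin d) (Fin d) ℝ)
    (hA : ∀ i j : Fin d, 0 ≤ A i j) :
    (d : ℝ) ≤ (NormedSpace.exp A).trace
      ∧ ((NormedSpace.exp A).trace = d
          ↔ ∀ i : Fin d, ¬ Relation.TransGen (fun i j => A i j ≠ 0) i i) := by
  have hsum := hasSum_trace_exp A
  have hterm : ∀ k, 0 ≤ (k.factorial : ℝ)⁻¹ * trace (A ^ k) :=
    fun k => mul_nonneg (by positivity) (trace_pow_nonneg hA k)
  have hzeroth : ((0).factorial : ℝ)⁻¹ * trace (A ^ 0) = d := by simp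
  refine ⟨hzeroth ▸ le_hasSum hsum 0 fun k _ => hterm k, ?_⟩
  rw [← hzeroth, hsum.eq_apply_zero_iff_of_nonneg hterm,
    forall_not_transGen_iff_trace_pow_succ_eq_zero hA]
  simp [Nat.factorial_ne_zero]
end
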